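/- arXiv:2501.04209 — 2 statements merged into one kernel-verified Lean document; each statement's English description precedes it below -/
import Mathlib

section
/- Let n = p₁^{a₁}·p₂^{a₂}···p_k^{a_k} be an odd non-deficient number, where p₁, …, p_k are distinct primes and each aᵢ ≥ 1. Let j be an index with 1 ≤ j ≤ k such that p_j^{a_j+1} ≤ pᵢ^{aᵢ+1} for every i with 1 ≤ i ≤ k. Then H(n) ≥ 2 + (4/3)·(1/p_j^{a_j+1}). -/
/-!
Both `σ(n) φ(n)` and `n²` are multiplicative, and on a prime power
`σ(p^a) φ(p^a) = p^(2a) (1 - p^-(a+1))`. Hence `σ(n) φ(n) = n² ∏_{p^a ∥ n} (1 - p^-(a+1))`,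
and since every factor lies in `[0, 1]`, `σ(n)/n ≤ H(n) (1 - x)` with `x = q^-(a_q+1)` for any
prime `q ∣ n`. Non-deficiency then gives `H(n) ≥ 2/(1 - x) ≥ 2 + 2x`.
-/

/-- The sum of the positive divisors of `n`. -/
def sigma1 (n : ℕ) : ℕ := ∑ d ∈ n.divisors, d

/-- `H n = n / φ(n)`. -/
noncomputable def H (n : ℕ) : ℝ := (n : ℝ) / (Nat.totient n : ℝ)

open ArithmeticFunction
open scoped ArithmeticFunction.sigma Nat

theorem sigma1_eq_sigma_one (n : ℕ) : sigma1 n = σ 1 n :=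
  (sigma_one_apply n).symm

theorem sigma_one_mul_totient_prime_pow {p k : ℕ} (hp : p.Prime) (hk : k ≠ 0) :
    ((σ 1 (p ^ k) * φ (p ^ k) : ℕ) : ℝ) = ((p : ℝ) ^ k) ^ 2 * (1 - ((p : ℝ) ^ (k + 1))⁻¹) := by
  obtain ⟨j, rfl⟩ := Nat.exists_eq_add_one_of_ne_zero hk
  have hp0 : (p : ℝ) ≠ 0 := by exact_mod_cast hp.ne_zero
  rw [sigma_one_apply_prime_pow hp, Nat.totient_prime_pow_succ hp]
  push_cast [Nat.cast_sub hp.one_le]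
  calc (∑ i ∈ Finset.range (j + 1 + 1), (p : ℝ) ^ i) * ((p : ℝ) ^ j * (p - 1))
      = (p : ℝ) ^ j * ((p : ℝ) ^ (j + 1 + 1) - 1) := by rw [← geom_sum_mul]; ring
    _ = ((p : ℝ) ^ (j + 1)) ^ 2 * (1 - ((p : ℝ) ^ (j + 1 + 1))⁻¹) := by field_simp; ring

theorem sigma_one_mul_totient_eq {n : ℕ} (hn : n ≠ 0) :
    ((σ 1 n * φ n : ℕ) : ℝ) =
      (n : ℝ) ^ 2 * ∏ p ∈ n.primeFactors, (1 - ((p : ℝ) ^ (n.factorization p + 1))⁻¹) := by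
  have hmul : ∀ a b : ℕ, a.Coprime b →
      ((σ 1 (a * b) * φ (a * b) : ℕ) : ℝ) = ((σ 1 a * φ a : ℕ) : ℝ) * ((σ 1 b * φ b : ℕ) : ℝ) :=
    fun a b hab => by
      rw [isMultiplicative_sigma.map_mul_of_coprime hab, Nat.totient_mul hab]
      push_cast
      ring
  have hprod : (n : ℝ) = ∏ p ∈ n.primeFactors, (p : ℝ) ^ n.factorization p := by
    conv_lhs => rw [← Nat.prod_factorization_pow_eq_self hn]
    rw [Nat.prod_factorization_eq_prod_primeFactors]
    push_cast
    rfl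
  rw [Nat.multiplicative_factorization (fun m => ((σ 1 m * φ m : ℕ) : ℝ)) hmul (by simp) hn,
    Nat.prod_factorization_eq_prod_primeFactors, hprod, ← Finset.prod_pow,
    ← Finset.prod_mul_distrib]
  refine Finset.prod_congr rfl fun p hp => ?_
  exact sigma_one_mul_totient_prime_pow (Nat.prime_of_mem_primeFactors hp)
    (Finsupp.mem_support_iff.1 (by rwa [Nat.support_factorization]))

theorem sigma_one_mul_totient_le {n q : ℕ} (hq : q ∈ n.primeFactors) :
    ((σ 1 n * φ n : ℕ) : ℝ) ≤ (n : ℝ) ^ 2 * (1 - ((q : ℝ) ^ (n.factorization q + 1))⁻¹) := by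
  have hfactor : ∀ p ∈ n.primeFactors, 0 ≤ 1 - ((p : ℝ) ^ (n.factorization p + 1))⁻¹ ∧
      1 - ((p : ℝ) ^ (n.factorization p + 1))⁻¹ ≤ 1 := fun p hp => by
    have hp1 : (1 : ℝ) ≤ p := by exact_mod_cast (Nat.prime_of_mem_primeFactors hp).one_le
    exact ⟨sub_nonneg.2 (inv_le_one_of_one_le₀ (one_le_pow₀ hp1)),
      sub_le_self _ (inv_nonneg.2 (by positivity))⟩
  rw [sigma_one_mul_totient_eq (Nat.mem_primeFactors.1 hq).2.2]
  gcongr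
  simpa using Finset.prod_le_prod_of_subset_of_le_one (Finset.singleton_subset_iff.2 hq)
    (fun p hp => (hfactor p hp).1) (fun p hp _ => (hfactor p hp).2)

theorem sigma_one_div_le_H_mul {n q : ℕ} (hq : q ∈ n.primeFactors) :
    (σ 1 n : ℝ) / n ≤ H n * (1 - ((q : ℝ) ^ (n.factorization q + 1))⁻¹) := by
  have hn : 0 < n := Nat.pos_of_ne_zero (Nat.mem_primeFactors.1 hq).2.2
  have hnR : (0 : ℝ) < n := by exact_mod_cast hn
  have hφ : (0 : ℝ) < φ n := by exact_mod_cast Nat.totient_pos.2 hn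
  have h := sigma_one_mul_totient_le hq
  push_cast at h
  rw [H, div_le_iff₀ hnR, show (n : ℝ) / φ n * (1 - ((q : ℝ) ^ (n.factorization q + 1))⁻¹) * n
    = n ^ 2 * (1 - ((q : ℝ) ^ (n.factorization q + 1))⁻¹) / φ n by ring, le_div_iff₀ hφ]
  exact h

theorem H_lower_bound_of_min_prime_power_odd_general (n : ℕ)
    (hnondef : 2 * n ≤ sigma1 n)
    (q : ℕ) (hq : q ∈ n.primeFactors) :
    H n ≥ 2 + (4 / 3) * (1 / (q ^ (n.factorization q + 1) : ℝ)) := by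
  set x : ℝ := ((q : ℝ) ^ (n.factorization q + 1))⁻¹ with hx
  have hx0 : 0 < x := inv_pos.2 (pow_pos (by exact_mod_cast Nat.pos_of_mem_primeFactors hq) _)
  have hnR : (0 : ℝ) < n := by exact_mod_cast Nat.pos_of_ne_zero (Nat.mem_primeFactors.1 hq).2.2
  have habund : (2 : ℝ) ≤ σ 1 n / n := by
    rw [le_div_iff₀ hnR, ← sigma1_eq_sigma_one]
    exact_mod_cast hnondef
  have hH : 2 ≤ H n * (1 - x) := habund.trans (sigma_one_div_le_H_mul hq)
  have hH0 : 0 ≤ H n := div_nonneg n.cast_nonneg (φ n).cast_nonneg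
  rw [one_div, ← hx]
  -- `H n ≥ 2 + H n * x ≥ 2 + 2 x`
  nlinarith [mul_nonneg hH0 hx0.le]

theorem H_lower_bound_of_min_prime_power_odd (n : ℕ) (hn : 0 < n) (hodd : Odd n)
    (hnondef : 2 * n ≤ sigma1 n)
    (q : ℕ) (hq : q ∈ n.primeFactors)
    (hmin : ∀ p ∈ n.primeFactors,
      q ^ (n.factorization q + 1) ≤ p ^ (n.factorization p + 1)) :
    H n ≥ 2 + (4 / 3) * (1 / (q ^ (n.factorization q + 1) : ℝ)) :=
  H_lower_bound_of_min_prime_power_odd_general n hnondef q hq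
end

section
/- If n is a positive integer with KL(n) > 0, then h(n) ≥ 12/π². -/
/-- `KL n = ∑_{d ∣ n} d · log (d / (2 φ(d)))`. -/
noncomputable def KL (n : ℕ) : ℝ :=
  ∑ d ∈ n.divisors, (d : ℝ) * Real.log ((d : ℝ) / (2 * (Nat.totient d : ℝ)))

/-- `h n = σ(n) / n`. -/
noncomputable def h (n : ℕ) : ℝ := ((∑ d ∈ n.divisors, d : ℕ) : ℝ) / (n : ℝ)

/-!
A divisor `d` of `n` contributing a positive term to `KL n` has `d / φ(d) > 2`, i.e.
`∏_{p ∣ d} (1 - 1/p) < 1/2`, so the Weierstrass product inequality gives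
`∑_{p ∣ d} 1/p > 1/2`.
Since `h n = ∑_{e ∣ n} 1/e` and `1` and the primes dividing `d` all divide `n`,
`h n > 3/2 > 12/π²`.
-/

open Finset
open scoped Nat

theorem Finset.one_sub_sum_le_prod_one_sub {ι R : Type*} [CommRing R] [LinearOrder R]
    [IsStrictOrderedRing R] (s : Finset ι) {f : ι → R} (h0 : ∀ i ∈ s, 0 ≤ f i)
    (h1 : ∀ i ∈ s, f i ≤ 1) : 1 - ∑ i ∈ s, f i ≤ ∏ i ∈ s, (1 - f i) := by
  classical
  induction s using Finset.induction_on with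
  | empty => simp
  | insert a s ha ih =>
    rw [sum_insert ha, prod_insert ha]
    have hs := ih (fun i hi => h0 i (mem_insert_of_mem hi))
      (fun i hi => h1 i (mem_insert_of_mem hi))
    have ha0 := h0 a (mem_insert_self a s)
    have ha1 := h1 a (mem_insert_self a s)
    have hsum : 0 ≤ ∑ i ∈ s, f i := sum_nonneg fun i hi => h0 i (mem_insert_of_mem hi)
    nlinarith

theorem Nat.totient_eq_mul_prod_one_sub_inv {K : Type*} [Field K] [CharZero K] (n : ℕ) :
    (φ n : K) = n * ∏ p ∈ n.primeFactors, (1 - (p : K)⁻¹) := by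
  simpa using congrArg (Rat.cast : ℚ → K) (Nat.totient_eq_mul_prod_factors n)

theorem Nat.half_lt_sum_inv_primeFactors_of_two_mul_totient_lt {d : ℕ} (hd : 2 * φ d < d) :
    1 / 2 < ∑ p ∈ d.primeFactors, (p : ℝ)⁻¹ := by
  have hprod : ∏ p ∈ d.primeFactors, (1 - (p : ℝ)⁻¹) < 1 / 2 := by
    have hdR : 2 * (φ d : ℝ) < d := by exact_mod_cast hd
    rw [Nat.totient_eq_mul_prod_one_sub_inv] at hdR
    nlinarith
  have hweierstrass := one_sub_sum_le_prod_one_sub d.primeFactors (f := fun p => (p : ℝ)⁻¹)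
    (fun p _ => by positivity)
    fun p hp => inv_le_one_of_one_le₀ <| by
      exact_mod_cast (Nat.prime_of_mem_primeFactors hp).one_le
  linarith

theorem exists_two_mul_totient_lt_of_KL_pos {n : ℕ} (hKL : 0 < KL n) :
    ∃ d ∈ n.divisors, 2 * φ d < d := by
  obtain ⟨d, hd, hterm⟩ :=
    exists_lt_of_sum_lt (f := fun _ => (0 : ℝ)) (by simpa [KL] using hKL)
  refine ⟨d, hd, ?_⟩
  have hlog : 0 < Real.log ((d : ℝ) / (2 * (φ d : ℝ))) :=
    pos_of_mul_pos_right hterm (by positivity)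
  have hφ : (0 : ℝ) < 2 * φ d := by
    have := Nat.totient_pos.mpr (Nat.pos_of_mem_divisors hd)
    positivity
  have hratio := (Real.log_pos_iff (by positivity)).mp hlog
  rw [one_lt_div hφ] at hratio
  exact_mod_cast hratio

theorem h_eq_sum_inv_divisors (n : ℕ) : h n = ∑ e ∈ n.divisors, (e : ℝ)⁻¹ := by
  rw [h, Nat.cast_sum, sum_div, ← Nat.sum_div_divisors]
  refine sum_congr rfl fun e he => ?_
  have he0 : (e : ℝ) ≠ 0 := by exact_mod_cast (Nat.pos_of_mem_divisors he).ne'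
  have hn0 : (n : ℝ) ≠ 0 := by exact_mod_cast Nat.ne_zero_of_mem_divisors he
  rw [Nat.cast_div (Nat.dvd_of_mem_divisors he) he0]
  field_simp

theorem one_add_sum_inv_primeFactors_le_h {n d : ℕ} (hd : d ∈ n.divisors) :
    1 + ∑ p ∈ d.primeFactors, (p : ℝ)⁻¹ ≤ h n := by
  have hn0 := Nat.ne_zero_of_mem_divisors hd
  have hsub : insert 1 d.primeFactors ⊆ n.divisors := by
    refine insert_subset (Nat.one_mem_divisors.mpr hn0) fun p hp => ?_
    exact Nat.mem_divisors.mpr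
      ⟨(Nat.dvd_of_mem_primeFactors hp).trans (Nat.dvd_of_mem_divisors hd), hn0⟩
  have h1 : 1 ∉ d.primeFactors := fun h1 => Nat.not_prime_one (Nat.prime_of_mem_primeFactors h1)
  calc 1 + ∑ p ∈ d.primeFactors, (p : ℝ)⁻¹
      = ∑ e ∈ insert 1 d.primeFactors, (e : ℝ)⁻¹ := by
        rw [sum_insert h1, Nat.cast_one, inv_one]
    _ ≤ ∑ e ∈ n.divisors, (e : ℝ)⁻¹ :=
        sum_le_sum_of_subset_of_nonneg hsub fun _ _ _ => by positivity
    _ = h n := (h_eq_sum_inv_divisors n).symm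

theorem h_ge_of_KL_pos_general (n : ℕ) (hKL : KL n > 0) :
    h n ≥ 12 / Real.pi ^ 2 := by
  obtain ⟨d, hd, htotient⟩ := exists_two_mul_totient_lt_of_KL_pos hKL
  have hprimes := Nat.half_lt_sum_inv_primeFactors_of_two_mul_totient_lt htotient
  have hpi : 12 / Real.pi ^ 2 < 3 / 2 := by
    rw [div_lt_iff₀ (by positivity)]
    nlinarith [Real.pi_gt_three]
  linarith [one_add_sum_inv_primeFactors_le_h hd]

theorem h_ge_of_KL_pos (n : ℕ) (hn : 0 < n) (hKL : KL n > 0) :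
    h n ≥ 12 / Real.pi ^ 2 :=
  h_ge_of_KL_pos_general n hKL
end
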